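/- Let L > 0, T > 0 and let u : [−L, L] × [0, T] → ℝ be smooth and satisfy the rank −1 Hunter–Saxton equation u_{xt} = −(u u_x)_x + (1/2)u_x², together with the boundary conditions u(−L, t) = 0 and u_x(L, t) = 0 for all t ∈ [0, T]. Then the Hamiltonian H₂(t) = (1/2)∫_{−L}^{L} u(x,t) u_x(x,t)² dx satisfies d/dt H₂(t) = (1/2) u_t(L, t)² for all t ∈ [0, T]. -/

import Mathlib

/-- Partial derivative in the spatial (first) variable. -/
noncomputable def pdx (u : ℝ → ℝ → ℝ) : ℝ → ℝ → ℝ :=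
  fun x t => deriv (fun y => u y t) x

/-- Partial derivative in the temporal (second) variable. -/
noncomputable def pdt (u : ℝ → ℝ → ℝ) : ℝ → ℝ → ℝ :=
  fun x t => deriv (fun s => u x s) t

open Function Set MeasureTheory intervalIntegral

section Aux

variable {u : ℝ → ℝ → ℝ}

lemma slice_x_hasDerivAt (hu : ContDiff ℝ (⊤ : ℕ∞) (uncurry u)) (x t : ℝ) :
    HasDerivAt (fun y => u y t) (fderiv ℝ (uncurry u) (x, t) (1, 0)) x := by
  have h1 : HasFDerivAt (uncurry u) (fderiv ℝ (uncurry u) (x, t)) (x, t) :=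
    (hu.differentiable (by simp) (x, t)).hasFDerivAt
  have h2 : HasDerivAt (fun y : ℝ => ((y, t) : ℝ × ℝ)) ((1 : ℝ), (0 : ℝ)) x :=
    HasDerivAt.prodMk (hasDerivAt_id x) (hasDerivAt_const x t)
  have := h1.comp_hasDerivAt x h2
  exact this

lemma slice_t_hasDerivAt (hu : ContDiff ℝ (⊤ : ℕ∞) (uncurry u)) (x t : ℝ) :
    HasDerivAt (fun s => u x s) (fderiv ℝ (uncurry u) (x, t) (0, 1)) t := by
  have h1 : HasFDerivAt (uncurry u) (fderiv ℝ (uncurry u) (x, t)) (x, t) :=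
    (hu.differentiable (by simp) (x, t)).hasFDerivAt
  have h2 : HasDerivAt (fun s : ℝ => ((x, s) : ℝ × ℝ)) ((0 : ℝ), (1 : ℝ)) t :=
    HasDerivAt.prodMk (hasDerivAt_const t x) (hasDerivAt_id t)
  have := h1.comp_hasDerivAt t h2
  exact this

lemma pdx_eq (hu : ContDiff ℝ (⊤ : ℕ∞) (uncurry u)) (x t : ℝ) :
    pdx u x t = fderiv ℝ (uncurry u) (x, t) (1, 0) :=
  (slice_x_hasDerivAt hu x t).deriv

lemma pdt_eq (hu : ContDiff ℝ (⊤ : ℕ∞) (uncurry u)) (x t : ℝ) :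
    pdt u x t = fderiv ℝ (uncurry u) (x, t) (0, 1) :=
  (slice_t_hasDerivAt hu x t).deriv

lemma uncurry_pdx_eq (hu : ContDiff ℝ (⊤ : ℕ∞) (uncurry u)) :
    uncurry (pdx u) = fun p : ℝ × ℝ => fderiv ℝ (uncurry u) p (1, 0) := by
  ext ⟨x, t⟩; exact pdx_eq hu x t

lemma uncurry_pdt_eq (hu : ContDiff ℝ (⊤ : ℕ∞) (uncurry u)) :
    uncurry (pdt u) = fun p : ℝ × ℝ => fderiv ℝ (uncurry u) p (0, 1) := by
  ext ⟨x, t⟩; exact pdt_eq hu x t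

lemma contDiff_pdx (hu : ContDiff ℝ (⊤ : ℕ∞) (uncurry u)) :
    ContDiff ℝ (⊤ : ℕ∞) (uncurry (pdx u)) := by
  rw [uncurry_pdx_eq hu]
  exact (hu.fderiv_right (by simp)).clm_apply contDiff_const

lemma contDiff_pdt (hu : ContDiff ℝ (⊤ : ℕ∞) (uncurry u)) :
    ContDiff ℝ (⊤ : ℕ∞) (uncurry (pdt u)) := by
  rw [uncurry_pdt_eq hu]
  exact (hu.fderiv_right (by simp)).clm_apply contDiff_const

/-- Clairaut's theorem for `pdx`/`pdt`. -/
lemma clairaut (hu : ContDiff ℝ (⊤ : ℕ∞) (uncurry u)) (x t : ℝ) :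
    pdx (pdt u) x t = pdt (pdx u) x t := by
  have hsym : IsSymmSndFDerivAt ℝ (uncurry u) (x, t) :=
    hu.contDiffAt.isSymmSndFDerivAt (by simp [minSmoothness_of_isRCLikeNormedField]; change ((2 : ℕ∞) : WithTop ℕ∞) ≤ ((⊤ : ℕ∞) : WithTop ℕ∞); exact WithTop.coe_le_coe.mpr le_top)
  have hdf : DifferentiableAt ℝ (fderiv ℝ (uncurry u)) (x, t) :=
    ((hu.fderiv_right (m := (⊤ : ℕ∞)) (by simp)).differentiable (by simp)).differentiableAt
  have e1 : pdx (pdt u) x t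
      = fderiv ℝ (fun p : ℝ × ℝ => fderiv ℝ (uncurry u) p (0, 1)) (x, t) (1, 0) := by
    have := pdx_eq (u := pdt u) (contDiff_pdt hu) x t
    rwa [uncurry_pdt_eq hu] at this
  have e2 : pdt (pdx u) x t
      = fderiv ℝ (fun p : ℝ × ℝ => fderiv ℝ (uncurry u) p (1, 0)) (x, t) (0, 1) := by
    have := pdt_eq (u := pdx u) (contDiff_pdx hu) x t
    rwa [uncurry_pdx_eq hu] at this
  have key : ∀ v w : ℝ × ℝ,
      fderiv ℝ (fun p : ℝ × ℝ => fderiv ℝ (uncurry u) p v) (x, t) w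
        = fderiv ℝ (fderiv ℝ (uncurry u)) (x, t) w v := by
    intro v w
    have : fderiv ℝ (fun p : ℝ × ℝ => fderiv ℝ (uncurry u) p v) (x, t)
        = (fderiv ℝ (fderiv ℝ (uncurry u)) (x, t)).flip v := by
      have hv : DifferentiableAt ℝ (fun _ : ℝ × ℝ => v) (x, t) := differentiableAt_const v
      rw [fderiv_clm_apply hdf hv]
      simp
    rw [this]; rfl
  rw [e1, e2, key, key]
  exact hsym (1, 0) (0, 1)

end Aux

/-- For a smooth solution of the rank −1 Hunter–Saxton equation
`u_{xt} = −(u u_x)_x + ½ u_x²` on `[−L,L] × [0,T]` with `u(−L,t) = u_x(L,t) = 0`,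
the Hamiltonian `H₂(t) = ½∫_{−L}^{L} u u_x² dx` satisfies `H₂'(t) = ½ u_t(L,t)²`. -/
theorem stmt_4 (L T : ℝ) (hL : 0 < L) (hT : 0 < T)
    (u : ℝ → ℝ → ℝ) (hu : ContDiff ℝ (⊤ : ℕ∞) (Function.uncurry u))
    (hpde : ∀ x ∈ Set.Icc (-L) L, ∀ t ∈ Set.Icc (0 : ℝ) T,
      pdt (pdx u) x t
        = -(pdx (fun y s => u y s * pdx u y s) x t) + (1 / 2) * (pdx u x t) ^ 2)
    (hbc1 : ∀ t ∈ Set.Icc (0 : ℝ) T, u (-L) t = 0)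
    (hbc2 : ∀ t ∈ Set.Icc (0 : ℝ) T, pdx u L t = 0) :
    ∀ t ∈ Set.Icc (0 : ℝ) T,
      HasDerivAt (fun τ => (1 / 2) * ∫ x in (-L)..L, u x τ * (pdx u x τ) ^ 2)
        ((1 / 2) * (pdt u L t) ^ 2) t := by
  intro t ht
  -- smoothness of the various partial derivatives
  have hux := contDiff_pdx hu
  have hut := contDiff_pdt hu
  have huxx := contDiff_pdx hux
  have huxt := contDiff_pdt hux
  have hutx := contDiff_pdx hut
  -- continuity facts
  have cu : Continuous (uncurry u) := hu.continuous
  have cux : Continuous (uncurry (pdx u)) := hux.continuous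
  have cut : Continuous (uncurry (pdt u)) := hut.continuous
  have cuxx : Continuous (uncurry (pdx (pdx u))) := huxx.continuous
  have cuxt : Continuous (uncurry (pdt (pdx u))) := huxt.continuous
  have cutx : Continuous (uncurry (pdx (pdt u))) := hutx.continuous
  -- slice differentiability: `HasDerivAt` for all the slices we need
  have hX : ∀ x s : ℝ, HasDerivAt (fun y => u y s) (pdx u x s) x := by
    intro x s
    simpa [pdx_eq hu] using slice_x_hasDerivAt hu x s
  have hTd : ∀ x s : ℝ, HasDerivAt (fun τ => u x τ) (pdt u x s) s := by
    intro x s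
    simpa [pdt_eq hu] using slice_t_hasDerivAt hu x s
  have hXX : ∀ x s : ℝ, HasDerivAt (fun y => pdx u y s) (pdx (pdx u) x s) x := by
    intro x s
    simpa [pdx_eq hux] using slice_x_hasDerivAt hux x s
  have hXT : ∀ x s : ℝ, HasDerivAt (fun τ => pdx u x τ) (pdt (pdx u) x s) s := by
    intro x s
    simpa [pdt_eq hux] using slice_t_hasDerivAt hux x s
  have hTX : ∀ x s : ℝ, HasDerivAt (fun y => pdt u y s) (pdx (pdt u) x s) x := by
    intro x s
    simpa [pdx_eq hut] using slice_x_hasDerivAt hut x s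
  -- spatial derivative of `u * pdx u`
  have hprod : ∀ x s : ℝ, pdx (fun y s => u y s * pdx u y s) x s
      = pdx u x s * pdx u x s + u x s * pdx (pdx u) x s := by
    intro x s
    have : HasDerivAt (fun y => u y s * pdx u y s)
        (pdx u x s * pdx u x s + u x s * pdx (pdx u) x s) x := (hX x s).mul (hXX x s)
    exact this.deriv
  -- the time-derivative of the integrand
  set F' : ℝ → ℝ → ℝ := fun τ x =>
    pdt u x τ * (pdx u x τ) ^ 2 + u x τ * (2 * pdx u x τ * pdt (pdx u) x τ) with hF'
  have hF'cont : Continuous (fun p : ℝ × ℝ => F' p.1 p.2) := by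
    apply Continuous.add
    · exact (cut.comp (continuous_swap)).mul
        ((cux.comp (continuous_swap)).pow 2)
    · exact (cu.comp (continuous_swap)).mul
        ((continuous_const.mul (cux.comp continuous_swap)).mul (cuxt.comp continuous_swap))
  have hdiff : ∀ x τ : ℝ, HasDerivAt (fun σ => u x σ * (pdx u x σ) ^ 2) (F' τ x) τ := by
    intro x τ
    have h1 : HasDerivAt (fun σ => (pdx u x σ) ^ 2) (2 * pdx u x τ * pdt (pdx u) x τ) τ := by
      have := (hXT x τ).fun_pow 2
      simpa [mul_comm, mul_assoc, mul_left_comm] using this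
    have := (hTd x τ).fun_mul h1
    simpa [hF', mul_comm, mul_assoc, mul_left_comm] using this
  -- differentiation under the integral sign
  obtain ⟨C, hC⟩ : ∃ C, ∀ p ∈ Set.Icc (-L) L ×ˢ Set.Icc (t - 1) (t + 1),
      ‖F' p.2 p.1‖ ≤ C := by
    have hK : IsCompact (Set.Icc (-L) L ×ˢ Set.Icc (t - 1) (t + 1)) :=
      isCompact_Icc.prod isCompact_Icc
    obtain ⟨C, hC⟩ := hK.exists_bound_of_continuousOn
      ((hF'cont.comp continuous_swap).continuousOn)
    exact ⟨C, fun p hp => hC p hp⟩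
  have main : HasDerivAt (fun τ => ∫ x in (-L)..L, u x τ * (pdx u x τ) ^ 2)
      (∫ x in (-L)..L, F' t x) t := by
    have := hasDerivAt_integral_of_dominated_loc_of_deriv_le
      (F := fun τ x => u x τ * (pdx u x τ) ^ 2) (F' := F')
      (x₀ := t) (a := -L) (b := L) (μ := volume) (bound := fun _ => C)
      (s := Metric.ball t 1) (Metric.ball_mem_nhds t one_pos)
      (Filter.Eventually.of_forall fun τ =>
        (Continuous.aestronglyMeasurable (by
          exact ((cu.comp (Continuous.prodMk continuous_id continuous_const)).mul
            ((cux.comp (Continuous.prodMk continuous_id continuous_const)).pow 2)))))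
      (by
        apply Continuous.intervalIntegrable
        exact (cu.comp (Continuous.prodMk continuous_id continuous_const)).mul
          ((cux.comp (Continuous.prodMk continuous_id continuous_const)).pow 2))
      ((hF'cont.comp (Continuous.prodMk continuous_const continuous_id)).aestronglyMeasurable)
      (Filter.Eventually.of_forall fun x hx => by
        intro τ hτ
        apply hC (x, τ)
        constructor
        · have : Set.uIoc (-L) L ⊆ Set.Icc (-L) L := by
            rw [Set.uIoc_of_le (by linarith)]
            exact Set.Ioc_subset_Icc_self
          exact this hx
        · have := Metric.mem_ball.mp hτ
          rw [Real.dist_eq] at this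
          constructor <;> [linarith [abs_lt.mp this] ; linarith [abs_lt.mp this]])
      (by apply _root_.intervalIntegrable_const)
      (Filter.Eventually.of_forall fun x hx => fun τ hτ => hdiff x τ)
    exact this.2
  -- compute the integral of F' t via the fundamental theorem of calculus
  set g : ℝ → ℝ := fun x =>
    (pdt u x t) ^ 2 + 2 * u x t * pdx u x t * pdt u x t with hg
  have hgderiv : ∀ x ∈ Set.uIcc (-L) L, HasDerivAt g (F' t x) x := by
    intro x hx
    have hxmem : x ∈ Set.Icc (-L) L := by
      rwa [Set.uIcc_of_le (by linarith)] at hx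
    -- derivative of g
    have h1 : HasDerivAt (fun y => (pdt u y t) ^ 2)
        (2 * pdt u x t * pdx (pdt u) x t) x := by
      have := (hTX x t).fun_pow 2
      simpa [mul_comm, mul_assoc, mul_left_comm] using this
    have h2 : HasDerivAt (fun y => 2 * u y t * pdx u y t * pdt u y t)
        (2 * pdx u x t * pdx u x t * pdt u x t
          + 2 * u x t * pdx (pdx u) x t * pdt u x t
          + 2 * u x t * pdx u x t * pdx (pdt u) x t) x := by
      have ha : HasDerivAt (fun y => 2 * u y t) (2 * pdx u x t) x :=
        (hX x t).const_mul 2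
      have hb := (ha.fun_mul (hXX x t)).fun_mul (hTX x t)
      refine hb.congr_deriv ?_
      ring
    have hsum := h1.fun_add h2
    have hclair := clairaut hu x t
    have hpde' := hpde x hxmem t ht
    rw [hprod x t] at hpde'
    refine hsum.congr_deriv (Eq.symm ?_)
    rw [hF']
    simp only []
    rw [hclair]
    linear_combination (-2 * pdt u x t) * hpde'
  have hint : IntervalIntegrable (F' t) volume (-L) L := by
    apply Continuous.intervalIntegrable
    exact hF'cont.comp (Continuous.prodMk continuous_const continuous_id)
  have hFTC := intervalIntegral.integral_eq_sub_of_hasDerivAt hgderiv hint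
  -- boundary values
  have hbL : pdx u L t = 0 := hbc2 t ht
  have hbmL : u (-L) t = 0 := hbc1 t ht
  have hbtL : pdt u (-L) t = 0 := by
    -- u(-L, ·) vanishes on [0,T], hence its t-derivative vanishes there
    have hW : HasDerivWithinAt (fun s => u (-L) s) (pdt u (-L) t) (Set.Icc 0 T) t :=
      (hTd (-L) t).hasDerivWithinAt
    have hW0 : HasDerivWithinAt (fun s => u (-L) s) 0 (Set.Icc 0 T) t := by
      have : HasDerivWithinAt (fun _ : ℝ => (0 : ℝ)) 0 (Set.Icc 0 T) t :=
        (hasDerivAt_const t (0 : ℝ)).hasDerivWithinAt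
      exact this.congr (fun s hs => hbc1 s hs) (hbc1 t ht)
    have hud : UniqueDiffWithinAt ℝ (Set.Icc (0 : ℝ) T) t :=
      (uniqueDiffOn_Icc hT) t ht
    have heq := hud.eq hW.hasFDerivWithinAt hW0.hasFDerivWithinAt
    have := congrArg (fun l : ℝ →L[ℝ] ℝ => l 1) heq
    simpa using this
  have hval : (∫ x in (-L)..L, F' t x) = (pdt u L t) ^ 2 := by
    rw [hFTC, hg]
    simp only []
    rw [hbL, hbmL, hbtL]
    ring
  have hmain2 := HasDerivAt.const_mul (1/2 : ℝ) main
  rw [hval] at hmain2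
  exact hmain2
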